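/- Let A : U × V → F be a bilinear form with U, V finite-dimensional. The family of maximum stable pairs of subspaces, partially ordered by (X,Y) ⪯ (X',Y') iff X ⊆ X', forms a lattice with meet (X ∩ X', Y + Y') and join (X + X', Y ∩ Y'). -/

import Mathlib

/-!
If `(X, Y)` and `(X', Y')` are maximum stable pairs with common value `N = dim X + dim Y`, then
`(X ⊓ X', Y ⊔ Y')` and `(X ⊔ X', Y ⊓ Y')` are again stable. By the modular law
`dim (S ⊔ T) + dim (S ⊓ T) = dim S + dim T` their two dimension sums add up to `2 N`, while
each is at most `N`; hence both equal `N`. The order-theoretic part is the lattice structure of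
`Submodule F U`.
-/

/-- A pair of subspaces `(X, Y)` is stable for the bilinear form `A` if `A`
vanishes on `X × Y`. -/
def IsStable {F U V : Type*} [Field F]
    [AddCommGroup U] [Module F U] [AddCommGroup V] [Module F V]
    (A : U →ₗ[F] V →ₗ[F] F) (X : Submodule F U) (Y : Submodule F V) : Prop :=
  ∀ x ∈ X, ∀ y ∈ Y, A x y = 0

/-- A stable pair is maximum if it maximizes `dim X + dim Y`. -/
def IsMaxStable {F U V : Type*} [Field F]
    [AddCommGroup U] [Module F U] [AddCommGroup V] [Module F V]
    (A : U →ₗ[F] V →ₗ[F] F) (X : Submodule F U) (Y : Submodule F V) : Prop :=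
  IsStable A X Y ∧
    ∀ (X' : Submodule F U) (Y' : Submodule F V), IsStable A X' Y' →
      Module.finrank F X' + Module.finrank F Y' ≤
        Module.finrank F X + Module.finrank F Y

namespace IsStable

variable {F U V : Type*} [Field F] [AddCommGroup U] [Module F U] [AddCommGroup V] [Module F V]
  {A : U →ₗ[F] V →ₗ[F] F} {X X' : Submodule F U} {Y Y' : Submodule F V}

theorem inf_sup (h : IsStable A X Y) (h' : IsStable A X' Y') :
    IsStable A (X ⊓ X') (Y ⊔ Y') := by
  intro x hx y hy
  obtain ⟨y₁, hy₁, y₂, hy₂, rfl⟩ := Submodule.mem_sup.mp hy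
  rw [map_add, h x hx.1 y₁ hy₁, h' x hx.2 y₂ hy₂, add_zero]

theorem sup_inf (h : IsStable A X Y) (h' : IsStable A X' Y') :
    IsStable A (X ⊔ X') (Y ⊓ Y') := by
  intro x hx y hy
  obtain ⟨x₁, hx₁, x₂, hx₂, rfl⟩ := Submodule.mem_sup.mp hx
  rw [map_add, LinearMap.add_apply, h x₁ hx₁ y hy.1, h' x₂ hx₂ y hy.2, add_zero]

end IsStable

namespace IsMaxStable

open Module

variable {F U V : Type*} [Field F] [AddCommGroup U] [Module F U] [AddCommGroup V] [Module F V]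
  {A : U →ₗ[F] V →ₗ[F] F} {X X' X₀ : Submodule F U} {Y Y' Y₀ : Submodule F V}

theorem finrank_add_eq (h : IsMaxStable A X Y) (h' : IsMaxStable A X' Y') :
    finrank F X' + finrank F Y' = finrank F X + finrank F Y :=
  le_antisymm (h.2 X' Y' h'.1) (h'.2 X Y h.1)

theorem of_le_finrank_add (h : IsMaxStable A X Y) (h₀ : IsStable A X₀ Y₀)
    (hle : finrank F X + finrank F Y ≤ finrank F X₀ + finrank F Y₀) :
    IsMaxStable A X₀ Y₀ :=
  ⟨h₀, fun X₁ Y₁ h₁ => (h.2 X₁ Y₁ h₁).trans hle⟩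

variable [FiniteDimensional F U] [FiniteDimensional F V]

theorem finrank_inf_sup_add_finrank_sup_inf (X X' : Submodule F U) (Y Y' : Submodule F V) :
    (finrank F ↥(X ⊓ X') + finrank F ↥(Y ⊔ Y')) + (finrank F ↥(X ⊔ X') + finrank F ↥(Y ⊓ Y')) =
      (finrank F X + finrank F Y) + (finrank F X' + finrank F Y') := by
  have hX := Submodule.finrank_sup_add_finrank_inf_eq X X'
  have hY := Submodule.finrank_sup_add_finrank_inf_eq Y Y'
  omega

theorem inf_sup (h : IsMaxStable A X Y) (h' : IsMaxStable A X' Y') :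
    IsMaxStable A (X ⊓ X') (Y ⊔ Y') := by
  refine h.of_le_finrank_add (h.1.inf_sup h'.1) ?_
  have hjoin := h.2 _ _ (h.1.sup_inf h'.1)
  have hsum := finrank_inf_sup_add_finrank_sup_inf X X' Y Y'
  have hN := h.finrank_add_eq h'
  omega

theorem sup_inf (h : IsMaxStable A X Y) (h' : IsMaxStable A X' Y') :
    IsMaxStable A (X ⊔ X') (Y ⊓ Y') := by
  refine h.of_le_finrank_add (h.1.sup_inf h'.1) ?_
  have hmeet := h.2 _ _ (h.1.inf_sup h'.1)
  have hsum := finrank_inf_sup_add_finrank_sup_inf X X' Y Y'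
  have hN := h.finrank_add_eq h'
  omega

end IsMaxStable

/-- The family of maximum stable pairs, ordered by `(X,Y) ⪯ (X',Y') ↔ X ⊆ X'`,
is a lattice: `(X ⊓ X', Y ⊔ Y')` is the meet (greatest lower bound) and
`(X ⊔ X', Y ⊓ Y')` is the join (least upper bound). -/
theorem maxStable_lattice
    (F U V : Type*) [Field F]
    [AddCommGroup U] [Module F U] [FiniteDimensional F U]
    [AddCommGroup V] [Module F V] [FiniteDimensional F V]
    (A : U →ₗ[F] V →ₗ[F] F)
    (X X' : Submodule F U) (Y Y' : Submodule F V)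
    (h : IsMaxStable A X Y) (h' : IsMaxStable A X' Y') :
    IsMaxStable A (X ⊓ X') (Y ⊔ Y') ∧ IsMaxStable A (X ⊔ X') (Y ⊓ Y') ∧
    (X ⊓ X' ≤ X ∧ X ⊓ X' ≤ X' ∧
      ∀ (X'' : Submodule F U) (Y'' : Submodule F V), IsMaxStable A X'' Y'' →
        X'' ≤ X → X'' ≤ X' → X'' ≤ X ⊓ X') ∧
    (X ≤ X ⊔ X' ∧ X' ≤ X ⊔ X' ∧
      ∀ (X'' : Submodule F U) (Y'' : Submodule F V), IsMaxStable A X'' Y'' →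
        X ≤ X'' → X' ≤ X'' → X ⊔ X' ≤ X'') :=
  ⟨h.inf_sup h', h.sup_inf h',
    ⟨inf_le_left, inf_le_right, fun _ _ _ => le_inf⟩,
    ⟨le_sup_left, le_sup_right, fun _ _ _ => sup_le⟩⟩
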